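/- Let x = (x₁,x₂) ∈ Z² with x₁, x₂ > 0. Every contour γ surrounding {0,x} satisfies |γ∩E^h| ≥ 2(x₂+1) and |γ∩E^v| ≥ 2(x₁+1); in particular |γ| ≥ ‖x‖, and a contour γ ∈ Γ_{{0,x}} has |γ| = ‖x‖ if and only if |γ∩E^h| = 2(x₂+1) and |γ∩E^v| = 2(x₁+1). -/

import Mathlib

open MeasureTheory Filter

/-- An edge of the square lattice `ℤ × ℤ`, encoded by its lower-left endpoint `base`
together with its direction: a horizontal edge joins `base` to `base + (1,0)`,
a vertical edge joins `base` to `base + (0,1)`. This encodes exactly the set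
`𝔼` of nearest-neighbour edges of `ℤ²`. -/
structure LatticeEdge where
  base : ℤ × ℤ
  horiz : Bool
deriving DecidableEq

namespace LatticeEdge

/-- First endpoint of an edge. -/
def fst (e : LatticeEdge) : ℤ × ℤ := e.base

/-- Second endpoint of an edge. -/
def snd (e : LatticeEdge) : ℤ × ℤ :=
  if e.horiz then (e.base.1 + 1, e.base.2) else (e.base.1, e.base.2 + 1)

/-- The two endpoints of an edge, as an unordered pair. -/
def ends (e : LatticeEdge) : Sym2 (ℤ × ℤ) := s(e.fst, e.snd)

end LatticeEdge

/-- The graph on `ℤ²` whose edges are the lattice edges belonging to `S`. -/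
def graphOf (S : Set LatticeEdge) : SimpleGraph (ℤ × ℤ) where
  Adj u v := u ≠ v ∧ ∃ e ∈ S, e.ends = s(u, v)
  symm := by
    constructor
    intro u v h
    obtain ⟨hne, e, he, hs⟩ := h
    exact ⟨hne.symm, e, he, hs.trans (Sym2.eq_swap)⟩
  loopless := by
    constructor
    intro u h
    exact h.1 rfl

/-- The graph `(ℤ², 𝔼 ∖ γ)` obtained by deleting the edges of `γ`. -/
def complGraph (γ : Finset LatticeEdge) : SimpleGraph (ℤ × ℤ) :=
  graphOf {e | e ∉ γ}

/-- A finite set `γ` of lattice edges is a *contour* if the graph `(ℤ², 𝔼 ∖ γ)` has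
exactly one finite connected component, and `γ` is minimal with this property:
for every `e ∈ γ`, the graph `(ℤ², 𝔼 ∖ (γ ∖ {e}))` has no finite connected component. -/
def IsContour (γ : Finset LatticeEdge) : Prop :=
  (∃! C : (complGraph γ).ConnectedComponent, C.supp.Finite) ∧
  ∀ e ∈ γ, ∀ C : (graphOf {f | f ∉ γ ∨ f = e}).ConnectedComponent, ¬ C.supp.Finite

/-- A contour `γ` *surrounds* a set `X ⊆ ℤ²` of vertices if `X` is contained in the
vertex set `I_γ` of the (unique) finite connected component of `(ℤ², 𝔼 ∖ γ)`. -/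
def Surrounds (γ : Finset LatticeEdge) (X : Set (ℤ × ℤ)) : Prop :=
  IsContour γ ∧ ∃ C : (complGraph γ).ConnectedComponent, C.supp.Finite ∧ X ⊆ C.supp

/-- `Γ^n_X` : the set of contours of cardinality `n` surrounding `X`. -/
def GammaN (X : Set (ℤ × ℤ)) (n : ℕ) : Set (Finset LatticeEdge) :=
  {γ | Surrounds γ X ∧ γ.card = n}

/-- `‖x‖ = 2(x₁ + x₂ + 2)`, the cardinality of a minimal contour surrounding `{0, x}`. -/
def normC (x : ℤ × ℤ) : ℕ := (2 * (x.1 + x.2 + 2)).toNat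

/-- `β_x` : the number of minimal contours surrounding `{0, x}`. -/
noncomputable def betaX (x : ℤ × ℤ) : ℕ := Nat.card ↥(GammaN {0, x} (normC x))

/-- Number of horizontal edges of `γ`, i.e. `|γ ∩ 𝔼ʰ|`. -/
def hCount (γ : Finset LatticeEdge) : ℕ := (γ.filter fun e => e.horiz = true).card

/-- Number of vertical edges of `γ`, i.e. `|γ ∩ 𝔼ᵛ|`. -/
def vCount (γ : Finset LatticeEdge) : ℕ := (γ.filter fun e => e.horiz = false).card

/-- The dual edge `e*` of a lattice edge `e`.  We identify the dual lattice
`ℤ² + (1/2, 1/2)` with `ℤ²` via `(a,b) ↦ (a + 1/2, b + 1/2)`; under this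
identification the dual edge crossing the horizontal edge `(a,b)–(a+1,b)` joins
`(a, b-1)` to `(a, b)` (a vertical dual edge), and the dual edge crossing the
vertical edge `(a,b)–(a,b+1)` joins `(a-1, b)` to `(a, b)` (a horizontal dual edge). -/
def dualEdge (e : LatticeEdge) : LatticeEdge :=
  if e.horiz then ⟨(e.base.1, e.base.2 - 1), false⟩ else ⟨(e.base.1 - 1, e.base.2), true⟩

/-- A finite set `S` of (dual) lattice edges is a *circuit* if it is the edge set of a
closed self-avoiding path: there are `n ≥ 3` distinct vertices `c 0, …, c (n-1)`,
cyclically consecutive ones being joined by an edge of `S`, and every edge of `S` arising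
this way. -/
def IsCircuit (S : Finset LatticeEdge) : Prop :=
  ∃ n : ℕ, 3 ≤ n ∧ ∃ c : ZMod n → ℤ × ℤ, Function.Injective c ∧
    (∀ i : ZMod n, ∃ e ∈ S, e.ends = s(c i, c (i + 1))) ∧
    (∀ e ∈ S, ∃ i : ZMod n, e.ends = s(c i, c (i + 1)))

/-- The dual edge `e_k*` joining `(k - 1/2, -1/2)` to `(k - 1/2, 1/2)`; in our
identification of the dual lattice with `ℤ²` this is the vertical dual edge with base
`(k-1, -1)`, i.e. the dual of the horizontal edge `(k-1, 0)–(k, 0)`. -/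
def ekStar (k : ℤ) : LatticeEdge := ⟨(k - 1, -1), false⟩

/-- The probability that the edge `e` is open: `p_h` for horizontal edges and `p_v`
for vertical ones. -/
noncomputable def edgeProb (ph pv : ℝ) (e : LatticeEdge) : ℝ := if e.horiz then ph else pv

/-- `P` is the Bernoulli product measure `P_{(p_h, p_v)}` on configurations
`ω ∈ {0,1}^𝔼` (encoded as `LatticeEdge → Bool`, `true` = open): it is a probability
measure and, for every finite set of edges, the states of those edges are independent
Bernoulli variables with the correct parameters.  These cylinder probabilities
characterize the product measure uniquely. -/
def IsBernoulliProduct (ph pv : ℝ) (P : Measure (LatticeEdge → Bool)) : Prop :=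
  IsProbabilityMeasure P ∧
    ∀ (F : Finset LatticeEdge) (σ : LatticeEdge → Bool),
      P {ω | ∀ e ∈ F, ω e = σ e} =
        ∏ e ∈ F, ENNReal.ofReal
          (if σ e then edgeProb ph pv e else 1 - edgeProb ph pv e)

/-- The graph of open edges of the configuration `ω`. -/
def openGraph (ω : LatticeEdge → Bool) : SimpleGraph (ℤ × ℤ) :=
  graphOf {e | ω e = true}

/-- `x` and `y` belong to the same finite open cluster of the configuration `ω`. -/
def SameFiniteCluster (ω : LatticeEdge → Bool) (x y : ℤ × ℤ) : Prop :=
  ∃ C : (openGraph ω).ConnectedComponent, x ∈ C.supp ∧ y ∈ C.supp ∧ C.supp.Finite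

/-- The truncated (finite) connectivity `τ^f_p(x,y)`: the probability that `x` and `y`
belong to the same finite open cluster. -/
noncomputable def tauF (P : Measure (LatticeEdge → Bool)) (x y : ℤ × ℤ) : ℝ :=
  (P {ω | SameFiniteCluster ω x y}).toReal

/-- The box `V_N = ([-N,N] × [-N,N]) ∩ ℤ²`. -/
def VN (N : ℕ) : Set (ℤ × ℤ) := {v | |v.1| ≤ (N : ℤ) ∧ |v.2| ≤ (N : ℤ)}

/-- The interior vertex boundary `∂_v^int V_N = {x ∈ V_N : d(x, ℤ² ∖ V_N) = 1}`. -/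
def intBdry (N : ℕ) : Set (ℤ × ℤ) :=
  {v | (|v.1| ≤ (N : ℤ) ∧ |v.2| ≤ (N : ℤ)) ∧ (|v.1| = (N : ℤ) ∨ |v.2| = (N : ℤ))}

/-- `e ∈ E_N`: both endpoints of `e` lie in `V_N`. -/
def edgeInBox (N : ℕ) (e : LatticeEdge) : Prop := e.fst ∈ VN N ∧ e.snd ∈ VN N

/-- The graph on `(V_N, open edges of E_N)` (vertices outside `V_N` are isolated). -/
def openGraphN (N : ℕ) (ω : LatticeEdge → Bool) : SimpleGraph (ℤ × ℤ) :=
  graphOf {e | edgeInBox N e ∧ ω e = true}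

/-- The finite-volume event defining `τ^{f,N}_p(x,y)`: there is an open cluster `A` of
`(V_N, open edges of E_N)` with `{x,y} ⊆ V_A` and `V_A ∩ ∂_v^int V_N = ∅`. -/
def FiniteVolEvent (N : ℕ) (x y : ℤ × ℤ) (ω : LatticeEdge → Bool) : Prop :=
  ∃ C : (openGraphN N ω).ConnectedComponent,
    x ∈ C.supp ∧ y ∈ C.supp ∧ C.supp ∩ intBdry N = ∅

/-- The finite-volume finite connectivity `τ^{f,N}_p(x,y)`. -/
noncomputable def tauFN (P : Measure (LatticeEdge → Bool)) (N : ℕ) (x y : ℤ × ℤ) : ℝ :=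
  (P {ω | FiniteVolEvent N x y ω}).toReal

/-- `λ = (1-p)/p`. -/
noncomputable def lam (p : ℝ) : ℝ := (1 - p) / p

/-- The threshold `η̃(p_h, x₁, x₂)` from the paper. -/
noncomputable def etaTilde (ph : ℝ) (x1 x2 : ℤ) : ℝ :=
  ((betaX (x1, x2) : ℝ) * ph ^ (4 * (x1 + x2 + 2)) /
      ((4 ^ 3 * lam ph) ^ (x1 + x2 + 3) / (1 - 4 ^ 3 * lam ph) +
        (betaX (x1, x2) : ℝ) * (1 + 12 * lam ph) ^ (2 * (x1 + x2 + 2)))) ^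
    (1 / (2 * ((x2 : ℝ) - (x1 : ℝ))))

/-!
The finite component `I_γ` contains `0` and `x` and is connected, and a lattice step moves
each coordinate by at most one, so `I_γ` meets every column `{a} × ℤ` with `0 ≤ a ≤ x₁`.
Being finite, `I_γ` must leave such a column both downwards and upwards, and each exit crosses
a vertical edge of that column, which therefore lies in `γ`. This gives two vertical edges of
`γ` in each of the `x₁ + 1` columns, and symmetrically two horizontal edges in each of the
`x₂ + 1` rows, and the claims about `|γ|` follow from `|γ| = |γ ∩ Eʰ| + |γ ∩ Eᵛ|`.
-/

open SimpleGraph Finset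

theorem Set.Finite.exists_lt_notMem_add_one_mem {s : Set ℤ} (hs : s.Finite) {t : ℤ}
    (ht : t ∈ s) : ∃ b < t, b ∉ s ∧ b + 1 ∈ s := by
  obtain ⟨m, hm, hmin⟩ := Set.exists_min_image s id hs ⟨t, ht⟩
  simp only [id] at hmin
  refine ⟨m - 1, by linarith [hmin t ht], fun h => ?_, by simpa using hm⟩
  linarith [hmin _ h]

theorem Set.Finite.exists_ge_mem_add_one_notMem {s : Set ℤ} (hs : s.Finite) {t : ℤ}
    (ht : t ∈ s) : ∃ c ≥ t, c ∈ s ∧ c + 1 ∉ s := by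
  obtain ⟨m, hm, hmax⟩ := Set.exists_max_image s id hs ⟨t, ht⟩
  simp only [id] at hmax
  exact ⟨m, hmax t ht, hm, fun h => by linarith [hmax _ h]⟩

theorem SimpleGraph.Walk.exists_mem_support_eq {V : Type*} {G : SimpleGraph V} (f : V → ℤ)
    (hf : ∀ a b, G.Adj a b → |f b - f a| ≤ 1) {u v : V} (w : G.Walk u v) {t : ℤ}
    (hu : f u ≤ t) (hv : t ≤ f v) : ∃ p ∈ w.support, f p = t := by
  induction w with
  | nil => exact ⟨_, Walk.start_mem_support _, le_antisymm hu hv⟩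
  | @cons a b _ hab w ih =>
    by_cases hb : f b ≤ t
    · obtain ⟨p, hp, hpt⟩ := ih hb hv
      exact ⟨p, List.mem_cons_of_mem _ hp, hpt⟩
    · have := abs_le.1 (hf a b hab)
      exact ⟨a, Walk.start_mem_support _, by omega⟩

theorem SimpleGraph.ConnectedComponent.exists_mem_supp_eq {V : Type*} {G : SimpleGraph V}
    (C : G.ConnectedComponent) (f : V → ℤ) (hf : ∀ a b, G.Adj a b → |f b - f a| ≤ 1)
    {u v : V} (hu : u ∈ C.supp) (hv : v ∈ C.supp) {t : ℤ} (hut : f u ≤ t) (htv : t ≤ f v) :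
    ∃ p ∈ C.supp, f p = t := by
  classical
  obtain ⟨w⟩ := ConnectedComponent.exact (hu.trans hv.symm)
  obtain ⟨p, hp, hpt⟩ := w.exists_mem_support_eq f hf hut htv
  exact ⟨p, hu ▸ (ConnectedComponent.sound (w.takeUntil p hp).reachable).symm, hpt⟩

namespace LatticeEdge

theorem fst_ne_snd (e : LatticeEdge) : e.fst ≠ e.snd := by
  unfold fst snd
  cases e.horiz <;> simp [Prod.ext_iff]

theorem abs_sub_le_one_of_graphOf_adj {S : Set LatticeEdge} {a b : ℤ × ℤ}
    (h : (graphOf S).Adj a b) : |b.1 - a.1| ≤ 1 ∧ |b.2 - a.2| ≤ 1 := by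
  obtain ⟨-, e, -, he⟩ := h
  rcases Sym2.eq_iff.1 he with ⟨rfl, rfl⟩ | ⟨rfl, rfl⟩ <;>
  · unfold fst snd
    cases e.horiz <;> simp

theorem mem_of_not_fst_mem_supp_iff {γ : Finset LatticeEdge} {e : LatticeEdge}
    (C : (complGraph γ).ConnectedComponent) (h : ¬(e.fst ∈ C.supp ↔ e.snd ∈ C.supp)) :
    e ∈ γ := by
  by_contra he
  exact h (C.mem_supp_congr_adj ⟨fst_ne_snd e, e, he, rfl⟩)

end LatticeEdge

section FiniteComponent

variable {γ : Finset LatticeEdge} {C : (complGraph γ).ConnectedComponent}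

theorem exists_vertical_mem_below_above (hC : C.supp.Finite) {v : ℤ × ℤ}
    (hv : v ∈ C.supp) :
    ∃ b c, b < v.2 ∧ v.2 ≤ c ∧
      (⟨(v.1, b), false⟩ : LatticeEdge) ∈ γ ∧ (⟨(v.1, c), false⟩ : LatticeEdge) ∈ γ := by
  have hcol : {b : ℤ | (v.1, b) ∈ C.supp}.Finite :=
    hC.preimage fun _ _ _ _ h => (Prod.mk.inj h).2
  obtain ⟨b, hbv, hb, hb1⟩ := hcol.exists_lt_notMem_add_one_mem hv
  obtain ⟨c, hcv, hc, hc1⟩ := hcol.exists_ge_mem_add_one_notMem hv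
  refine ⟨b, c, hbv, hcv, LatticeEdge.mem_of_not_fst_mem_supp_iff C ?_,
    LatticeEdge.mem_of_not_fst_mem_supp_iff C ?_⟩ <;>
  simp_all [LatticeEdge.fst, LatticeEdge.snd]

theorem exists_horizontal_mem_left_right (hC : C.supp.Finite) {v : ℤ × ℤ}
    (hv : v ∈ C.supp) :
    ∃ a c, a < v.1 ∧ v.1 ≤ c ∧
      (⟨(a, v.2), true⟩ : LatticeEdge) ∈ γ ∧ (⟨(c, v.2), true⟩ : LatticeEdge) ∈ γ := by
  have hrow : {a : ℤ | (a, v.2) ∈ C.supp}.Finite :=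
    hC.preimage fun _ _ _ _ h => (Prod.mk.inj h).1
  obtain ⟨a, hav, ha, ha1⟩ := hrow.exists_lt_notMem_add_one_mem hv
  obtain ⟨c, hcv, hc, hc1⟩ := hrow.exists_ge_mem_add_one_notMem hv
  refine ⟨a, c, hav, hcv, LatticeEdge.mem_of_not_fst_mem_supp_iff C ?_,
    LatticeEdge.mem_of_not_fst_mem_supp_iff C ?_⟩ <;>
  simp_all [LatticeEdge.fst, LatticeEdge.snd]

theorem two_mul_le_vCount (hC : C.supp.Finite) {u v : ℤ × ℤ} (hu : u ∈ C.supp)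
    (hv : v ∈ C.supp) (huv : u.1 ≤ v.1) : 2 * (v.1 - u.1 + 1) ≤ (vCount γ : ℤ) := by
  set s := γ.filter fun e => e.horiz = false ∧ e.base.1 ∈ Icc u.1 v.1
  have hfiber : ∀ a ∈ Icc u.1 v.1, 2 ≤ #{e ∈ s | e.base.1 = a} := by
    intro a ha
    obtain ⟨p, hp, rfl⟩ := C.exists_mem_supp_eq Prod.fst
      (fun _ _ h => (LatticeEdge.abs_sub_le_one_of_graphOf_adj h).1) hu hv
      (mem_Icc.1 ha).1 (mem_Icc.1 ha).2
    obtain ⟨b, c, hbp, hpc, hb, hc⟩ := exists_vertical_mem_below_above hC hp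
    refine one_lt_card.2 ⟨⟨(p.1, b), false⟩, ?_, ⟨(p.1, c), false⟩, ?_, ?_⟩
    all_goals simp_all [s]
    omega
  have hcount :=
    mul_card_image_le_card_of_maps_to (fun e he => (mem_filter.1 he).2.2) 2 hfiber
  have hs : #s ≤ vCount γ := card_le_card (monotone_filter_right γ fun _ _ h => h.1)
  rw [Int.card_Icc] at hcount
  omega

theorem two_mul_le_hCount (hC : C.supp.Finite) {u v : ℤ × ℤ} (hu : u ∈ C.supp)
    (hv : v ∈ C.supp) (huv : u.2 ≤ v.2) : 2 * (v.2 - u.2 + 1) ≤ (hCount γ : ℤ) := by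
  set s := γ.filter fun e => e.horiz = true ∧ e.base.2 ∈ Icc u.2 v.2
  have hfiber : ∀ a ∈ Icc u.2 v.2, 2 ≤ #{e ∈ s | e.base.2 = a} := by
    intro a ha
    obtain ⟨p, hp, rfl⟩ := C.exists_mem_supp_eq Prod.snd
      (fun _ _ h => (LatticeEdge.abs_sub_le_one_of_graphOf_adj h).2) hu hv
      (mem_Icc.1 ha).1 (mem_Icc.1 ha).2
    obtain ⟨b, c, hbp, hpc, hb, hc⟩ := exists_horizontal_mem_left_right hC hp
    refine one_lt_card.2 ⟨⟨(b, p.2), true⟩, ?_, ⟨(c, p.2), true⟩, ?_, ?_⟩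
    all_goals simp_all [s]
    omega
  have hcount :=
    mul_card_image_le_card_of_maps_to (fun e he => (mem_filter.1 he).2.2) 2 hfiber
  have hs : #s ≤ hCount γ := card_le_card (monotone_filter_right γ fun _ _ h => h.1)
  rw [Int.card_Icc] at hcount
  omega

end FiniteComponent

theorem hCount_add_vCount (γ : Finset LatticeEdge) : hCount γ + vCount γ = #γ := by
  simpa [hCount, vCount] using card_filter_add_card_filter_not (s := γ) (fun e => e.horiz = true)

/-- For `x = (x₁,x₂)` with `x₁, x₂ > 0`, every contour `γ`
surrounding `{0,x}` has at least `2(x₂+1)` horizontal and at least `2(x₁+1)` vertical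
edges; in particular `|γ| ≥ ‖x‖`, with equality iff `|γ ∩ Eʰ| = 2(x₂+1)` and
`|γ ∩ Eᵛ| = 2(x₁+1)`. -/
theorem contour_edge_counts (x1 x2 : ℤ) (h1 : 0 < x1) (h2 : 0 < x2)
    (γ : Finset LatticeEdge) (hγ : Surrounds γ {0, (x1, x2)}) :
    (2 * (x2 + 1) ≤ (hCount γ : ℤ) ∧ 2 * (x1 + 1) ≤ (vCount γ : ℤ)) ∧
    normC (x1, x2) ≤ γ.card ∧
    (γ.card = normC (x1, x2) ↔
      ((hCount γ : ℤ) = 2 * (x2 + 1) ∧ (vCount γ : ℤ) = 2 * (x1 + 1))) := by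
  obtain ⟨-, C, hC, hsub⟩ := hγ
  have h0 : (0 : ℤ × ℤ) ∈ C.supp := hsub (by simp)
  have hx : (x1, x2) ∈ C.supp := hsub (by simp)
  have hh := two_mul_le_hCount hC h0 hx h2.le
  have hv := two_mul_le_vCount hC h0 hx h1.le
  have hsum := hCount_add_vCount γ
  simp only [Prod.fst_zero, Prod.snd_zero, sub_zero] at hh hv
  refine ⟨⟨hh, hv⟩, ?_, ?_⟩ <;> simp only [normC] <;> omega
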